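/- arXiv:2409.07148 — 3 statements merged into one kernel-verified Lean document; each statement's English description precedes it below -/
import Mathlib

section
/- The Metropolis-Hastings chain is reversible with respect to its target distribution π: if K(x,A) = ∫_A Q(x,dy) α(x,y) + r(x) 1_A(x), where α is the Metropolis-Hastings acceptance function and r(x) = 1 − ∫ Q(x,dy) α(x,y) is the rejection probability, then ∫_A K(x,B) π(dx) = ∫_B K(x,A) π(dx) for all measurable sets A, B. In particular π is an invariant measure of K. -/
open MeasureTheory
open scoped ENNReal

/-- The Metropolis-Hastings chain is reversible with respect to its target
distribution `π`; in particular `π` is invariant for the MH kernel `K`. -/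
theorem stmt_1 {E : Type*} [MeasurableSpace E]
    (lam : Measure E) [SigmaFinite lam]
    (p : E → ℝ) (hp_meas : Measurable p) (hp_nonneg : ∀ x, 0 ≤ p x)
    (hp_int : Integrable p lam) (hp_pos : 0 < ∫ x, p x ∂lam)
    (π : Measure E)
    (hπ : π = lam.withDensity fun x => ENNReal.ofReal (p x / ∫ z, p z ∂lam))
    (q : E → E → ℝ) (hq_meas : Measurable (Function.uncurry q))
    (hq_nonneg : ∀ x y, 0 ≤ q x y)
    (Q : E → Measure E)
    (hQ : ∀ x, Q x = lam.withDensity fun y => ENNReal.ofReal (q x y))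
    (hQ_markov : ∀ x, IsProbabilityMeasure (Q x))
    (α : E → E → ℝ)
    (hα : ∀ x y, α x y =
      if 0 < p x * q x y then min 1 (p y * q y x / (p x * q x y)) else 1)
    (K : E → Set E → ℝ≥0∞)
    (hK : ∀ x B, K x B =
      (∫⁻ y in B, ENNReal.ofReal (α x y) ∂(Q x)) +
        B.indicator (fun _ => 1 - ∫⁻ y, ENNReal.ofReal (α x y) ∂(Q x)) x) :
    (∀ A B : Set E, MeasurableSet A → MeasurableSet B →
        ∫⁻ x in A, K x B ∂π = ∫⁻ x in B, K x A ∂π) ∧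
    (∀ B : Set E, MeasurableSet B → ∫⁻ x, K x B ∂π = π B) := by
  have hc : (0:ℝ) < ∫ z, p z ∂lam := hp_pos
  set c : ℝ := ∫ z, p z ∂lam with hc_def
  set C : ℝ≥0∞ := ENNReal.ofReal c with hC_def
  have hC_pos : 0 < C := ENNReal.ofReal_pos.mpr hc
  have hCinv_ne_top : C⁻¹ ≠ ∞ := ENNReal.inv_ne_top.mpr hC_pos.ne'
  have hpq_nonneg : ∀ x y, 0 ≤ p x * q x y := fun x y =>
    mul_nonneg (hp_nonneg x) (hq_nonneg x y)
  have hα_nonneg : ∀ x y, 0 ≤ α x y := by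
    intro x y; rw [hα]; split_ifs with h
    · exact le_min zero_le_one (div_nonneg (hpq_nonneg y x) h.le)
    · exact zero_le_one
  have hα_le_one : ∀ x y, α x y ≤ 1 := by
    intro x y; rw [hα]; split_ifs with h
    · exact min_le_left _ _
    · exact le_refl 1
  have key : ∀ x y, p x * (q x y * α x y) = min (p x * q x y) (p y * q y x) := by
    intro x y
    rw [← mul_assoc, hα]
    split_ifs with h
    · rw [mul_min_of_nonneg _ _ (hpq_nonneg x y), mul_one,
        mul_div_cancel₀ _ (ne_of_gt h)]
    · have h0 : p x * q x y = 0 := le_antisymm (not_lt.mp h) (hpq_nonneg x y)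
      simp [h0, min_eq_left (hpq_nonneg y x)]
  -- measurability
  have hr1 : Measurable fun z : E × E => p z.1 * q z.1 z.2 :=
    (hp_meas.comp measurable_fst).mul hq_meas
  have hr2 : Measurable fun z : E × E => p z.2 * q z.2 z.1 :=
    (hp_meas.comp measurable_snd).mul (hq_meas.comp measurable_swap)
  have hαm : Measurable (Function.uncurry α) := by
    have : Function.uncurry α = fun z : E × E =>
        if 0 < p z.1 * q z.1 z.2 then
          min 1 (p z.2 * q z.2 z.1 / (p z.1 * q z.1 z.2)) else 1 := by
      funext z; exact hα z.1 z.2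
    rw [this]
    exact Measurable.ite (measurableSet_lt measurable_const hr1)
      (measurable_const.min (hr2.div hr1)) measurable_const
  have hGm : Measurable fun z : E × E => ENNReal.ofReal (q z.1 z.2 * α z.1 z.2) :=
    (hq_meas.mul hαm).ennreal_ofReal
  set F : E × E → ℝ≥0∞ :=
    fun z => ENNReal.ofReal (min (p z.1 * q z.1 z.2) (p z.2 * q z.2 z.1)) with hF_def
  have hFm : Measurable F := (hr1.min hr2).ennreal_ofReal
  have hFsymm : ∀ x y, F (x, y) = F (y, x) := by
    intro x y; simp only [hF_def, min_comm]
  -- rewrite the inner integral over Q x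
  have inner : ∀ (x : E) (B : Set E), MeasurableSet B →
      ∫⁻ y in B, ENNReal.ofReal (α x y) ∂(Q x)
        = ∫⁻ y in B, ENNReal.ofReal (q x y * α x y) ∂lam := by
    intro x B hB
    rw [hQ x, setLIntegral_withDensity_eq_setLIntegral_mul _
      (hq_meas.of_uncurry_left).ennreal_ofReal
      (hαm.of_uncurry_left).ennreal_ofReal hB]
    refine setLIntegral_congr_fun hB (fun y _ => ?_)
    simp [ENNReal.ofReal_mul (hq_nonneg x y)]
  -- measurability of x ↦ ∫⁻ y in B, …
  have hIm : ∀ B : Set E, Measurable fun x =>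
      ∫⁻ y in B, ENNReal.ofReal (q x y * α x y) ∂lam := by
    intro B
    exact Measurable.lintegral_prod_right (f := fun x y => ENNReal.ofReal (q x y * α x y))
      (ν := lam.restrict B) hGm
  -- accept part
  have haccept : ∀ A B : Set E, MeasurableSet A → MeasurableSet B →
      ∫⁻ x in A, ∫⁻ y in B, ENNReal.ofReal (α x y) ∂(Q x) ∂π
        = (∫⁻ x in A, ∫⁻ y in B, F (x, y) ∂lam ∂lam) * C⁻¹ := by
    intro A B hA hB
    have step1 : ∫⁻ x in A, ∫⁻ y in B, ENNReal.ofReal (α x y) ∂(Q x) ∂π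
        = ∫⁻ x in A, ∫⁻ y in B, ENNReal.ofReal (q x y * α x y) ∂lam ∂π :=
      setLIntegral_congr_fun hA (fun x _ => inner x B hB)
    rw [step1, hπ, setLIntegral_withDensity_eq_setLIntegral_mul _
      ((hp_meas.div_const _).ennreal_ofReal) (hIm B) hA]
    have step2 : ∀ x, ENNReal.ofReal (p x / c) *
        (∫⁻ y in B, ENNReal.ofReal (q x y * α x y) ∂lam)
        = (∫⁻ y in B, F (x, y) ∂lam) * C⁻¹ := by
      intro x
      rw [ENNReal.ofReal_div_of_pos hc, div_eq_mul_inv, mul_right_comm,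
        ← lintegral_const_mul' _ _ ENNReal.ofReal_ne_top]
      congr 1
      refine setLIntegral_congr_fun hB (fun y _ => ?_)
      rw [← ENNReal.ofReal_mul (hp_nonneg x), key x y]
    calc ∫⁻ x in A, (fun x => ENNReal.ofReal (p x / c)) x *
          (∫⁻ y in B, ENNReal.ofReal (q x y * α x y) ∂lam) ∂lam
        = ∫⁻ x in A, (∫⁻ y in B, F (x, y) ∂lam) * C⁻¹ ∂lam :=
          setLIntegral_congr_fun hA (fun x _ => step2 x)
      _ = (∫⁻ x in A, ∫⁻ y in B, F (x, y) ∂lam ∂lam) * C⁻¹ :=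
          lintegral_mul_const' _ _ hCinv_ne_top
  -- reversibility
  have hrev : ∀ A B : Set E, MeasurableSet A → MeasurableSet B →
      ∫⁻ x in A, K x B ∂π = ∫⁻ x in B, K x A ∂π := by
    intro A B hA hB
    simp only [hK]
    have hmeas_rej : ∀ S : Set E, MeasurableSet S → Measurable fun x =>
        S.indicator (fun _ => 1 - ∫⁻ y, ENNReal.ofReal (α x y) ∂(Q x)) x := by
      intro S hS
      have : (fun x => S.indicator
          (fun _ => 1 - ∫⁻ y, ENNReal.ofReal (α x y) ∂(Q x)) x)
          = S.indicator fun x =>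
            1 - ∫⁻ y, ENNReal.ofReal (q x y * α x y) ∂lam := by
        funext x
        by_cases hx : x ∈ S
        · simp only [Set.indicator_of_mem hx]
          rw [← Measure.restrict_univ (μ := Q x), inner x Set.univ MeasurableSet.univ,
            Measure.restrict_univ]
        · simp [Set.indicator_of_notMem hx]
      rw [this]
      exact (Measurable.const_sub (by simpa using hIm Set.univ) 1).indicator hS
    rw [lintegral_add_right _ (hmeas_rej B hB), lintegral_add_right _ (hmeas_rej A hA)]
    congr 1
    · -- accept part symmetric
      rw [haccept A B hA hB, haccept B A hB hA]
      congr 1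
      have hswap : ∫⁻ x in A, ∫⁻ y in B, F (y, x) ∂lam ∂lam
          = ∫⁻ y in B, ∫⁻ x in A, F (y, x) ∂lam ∂lam :=
        lintegral_lintegral_swap ((hFm.comp measurable_swap).aemeasurable)
      calc ∫⁻ x in A, ∫⁻ y in B, F (x, y) ∂lam ∂lam
          = ∫⁻ x in A, ∫⁻ y in B, F (y, x) ∂lam ∂lam := by
            refine setLIntegral_congr_fun hA (fun x _ => ?_)
            refine setLIntegral_congr_fun hB (fun y _ => ?_)
            exact hFsymm x y
        _ = ∫⁻ y in B, ∫⁻ x in A, F (y, x) ∂lam ∂lam := hswap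
    · -- rejection part symmetric
      have hrw : ∀ (S T : Set E), MeasurableSet T →
          ∫⁻ x in S, T.indicator
            (fun _ => 1 - ∫⁻ y, ENNReal.ofReal (α x y) ∂(Q x)) x ∂π
          = ∫⁻ x in T ∩ S, (1 - ∫⁻ y, ENNReal.ofReal (α x y) ∂(Q x)) ∂π := by
        intro S T hT
        have : ∀ x, T.indicator
            (fun _ => 1 - ∫⁻ y, ENNReal.ofReal (α x y) ∂(Q x)) x
            = T.indicator (fun x => 1 - ∫⁻ y, ENNReal.ofReal (α x y) ∂(Q x)) x := by
          intro x
          by_cases hx : x ∈ T <;> simp [hx]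
        calc ∫⁻ x in S, T.indicator
              (fun _ => 1 - ∫⁻ y, ENNReal.ofReal (α x y) ∂(Q x)) x ∂π
            = ∫⁻ x, T.indicator
              (fun x => 1 - ∫⁻ y, ENNReal.ofReal (α x y) ∂(Q x)) x ∂(π.restrict S) := by
              exact lintegral_congr fun x => this x
          _ = ∫⁻ x in T, (1 - ∫⁻ y, ENNReal.ofReal (α x y) ∂(Q x)) ∂(π.restrict S) :=
              lintegral_indicator hT _
          _ = ∫⁻ x in T ∩ S, (1 - ∫⁻ y, ENNReal.ofReal (α x y) ∂(Q x)) ∂π := by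
              rw [Measure.restrict_restrict hT]
      rw [hrw A B hB, hrw B A hA, Set.inter_comm]
  refine ⟨hrev, fun B hB => ?_⟩
  have hKuniv : ∀ x, K x Set.univ = 1 := by
    intro x
    have hI_le : (∫⁻ y, ENNReal.ofReal (α x y) ∂(Q x)) ≤ 1 := by
      have := hQ_markov x
      calc (∫⁻ y, ENNReal.ofReal (α x y) ∂(Q x))
          ≤ ∫⁻ _, 1 ∂(Q x) :=
            lintegral_mono fun y => ENNReal.ofReal_le_one.mpr (hα_le_one x y)
        _ = 1 := by simp
    rw [hK, Measure.restrict_univ, Set.indicator_univ]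
    exact add_tsub_cancel_of_le hI_le
  calc ∫⁻ x, K x B ∂π = ∫⁻ x in Set.univ, K x B ∂π := by rw [Measure.restrict_univ]
    _ = ∫⁻ x in B, K x Set.univ ∂π := hrev Set.univ B MeasurableSet.univ hB
    _ = ∫⁻ x in B, 1 ∂π := lintegral_congr fun x => hKuniv x
    _ = π B := setLIntegral_one B
end

section
/- On ℝ^d, suppose the target density p ∈ C¹(ℝ^d) is strictly positive, Σ ∈ ℝ^{d×d} is a constant symmetric positive semidefinite matrix, and U ∈ ℝ^{d×d} is antisymmetric. Define the drift b := ((Σ+U)/2) ∇ln p. Then the generator A f = b·∇f + (1/2) tr(Σ ∇²f) of the associated diffusion satisfies ∫ (Af) p dx = 0 for all f ∈ C_c^∞(ℝ^d); i.e., the measure with density p is infinitesimally invariant for the Langevin-type dynamics. -/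
open MeasureTheory

open Set

lemma div_int_zero {n : ℕ} (h : (Fin (n+1) → ℝ) → ℝ) (hh : ContDiff ℝ 1 h)
    (hc : HasCompactSupport h) (j : Fin (n+1)) :
    ∫ x, fderiv ℝ h x (Pi.single j 1) = 0 := by
  obtain ⟨R, hR0, hR⟩ : ∃ R, 0 ≤ R ∧ tsupport h ⊆ Metric.closedBall 0 R := by
    rcases hc.isCompact.isBounded.subset_closedBall 0 with ⟨R, hR⟩
    exact ⟨|R|, abs_nonneg R,
      hR.trans (Metric.closedBall_subset_closedBall (le_abs_self R))⟩
  set a : Fin (n+1) → ℝ := fun _ => -(R+1) with ha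
  set b : Fin (n+1) → ℝ := fun _ => (R+1) with hb
  have hout : ∀ y : Fin (n+1) → ℝ, (R + 1) ≤ |y j| → h y = 0 := by
    intro y hy
    apply image_eq_zero_of_notMem_tsupport
    intro hmem
    have h1 : ‖y‖ ≤ R := by simpa using Metric.mem_closedBall.1 (hR hmem)
    have h2 : |y j| ≤ ‖y‖ := by simpa [Real.norm_eq_abs] using norm_le_pi_norm y j
    linarith
  have key := integral_divergence_of_hasFDerivAt_off_countable' a b
    (fun i => by dsimp [a,b]; linarith)
    (fun i x => if i = j then h x else 0)
    (fun i x => if i = j then fderiv ℝ h x else 0)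
    ∅ countable_empty
    (fun i => by
      by_cases hij : i = j <;> simp [hij]
      · exact (hh.continuous).continuousOn
      · exact continuousOn_const)
    (fun x _ i => by
      by_cases hij : i = j <;> simp [hij]
      · exact (hh.differentiable one_ne_zero).differentiableAt.hasFDerivAt
      · exact hasFDerivAt_const 0 x)
    (by
      have : (fun x => ∑ i, (if i = j then fderiv ℝ h x else 0) (Pi.single i 1))
          = fun x => fderiv ℝ h x (Pi.single j 1) := by
        funext x
        rw [Finset.sum_eq_single j]
        · simp
        · intro i _ hij; simp [hij]
        · simp
      rw [this]
      exact ((hh.continuous_fderiv one_ne_zero).clm_apply continuous_const).continuousOn.integrableOn_compact isCompact_Icc)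
  have hsum : (fun x => ∑ i, (if i = j then fderiv ℝ h x else 0) (Pi.single i 1))
      = fun x => fderiv ℝ h x (Pi.single j 1) := by
    funext x
    rw [Finset.sum_eq_single j]
    · simp
    · intro i _ hij; simp [hij]
    · simp
  rw [hsum] at key
  have hmem : ∀ y ∈ tsupport h, y ∈ Icc a b := by
    intro y hy
    have h1 : ‖y‖ ≤ R := by simpa using Metric.mem_closedBall.1 (hR hy)
    have h2 : ∀ i, |y i| ≤ R := fun i =>
      le_trans (by simpa [Real.norm_eq_abs] using norm_le_pi_norm y i) h1
    refine ⟨fun i => ?_, fun i => ?_⟩ <;> dsimp [a, b]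
    · linarith [neg_abs_le (y i), (h2 i)]
    · linarith [le_abs_self (y i), (h2 i)]
  have hInt : ∫ x in Icc a b, fderiv ℝ h x (Pi.single j 1) =
      ∫ x, fderiv ℝ h x (Pi.single j 1) := by
    apply setIntegral_eq_integral_of_forall_compl_eq_zero
    intro x hx
    have : x ∉ tsupport h := fun hxs => hx (hmem x hxs)
    have hz : fderiv ℝ h x = 0 := by
      by_contra hne
      exact this (support_fderiv_subset ℝ (Function.mem_support.2 hne))
    simp [hz]
  rw [hInt] at key
  rw [key]
  apply Finset.sum_eq_zero
  intro i _
  by_cases hij : i = j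
  · subst hij
    have hfront : ∀ x : Fin n → ℝ, h (Fin.insertNth i (b i) x) = 0 := by
      intro x
      apply hout
      rw [Fin.insertNth_apply_same]
      dsimp [b]
      rw [abs_of_nonneg (by linarith : (0:ℝ) ≤ R + 1)]
    have hback : ∀ x : Fin n → ℝ, h (Fin.insertNth i (a i) x) = 0 := by
      intro x
      apply hout
      rw [Fin.insertNth_apply_same]
      dsimp [a]
      rw [abs_neg, abs_of_nonneg (by linarith : (0:ℝ) ≤ R + 1)]
    simp [hfront, hback]
  · simp [hij]

lemma div_int_zero' {d : ℕ} (h : (Fin d → ℝ) → ℝ) (hh : ContDiff ℝ 1 h)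
    (hc : HasCompactSupport h) (j : Fin d) :
    ∫ x, fderiv ℝ h x (Pi.single j 1) = 0 := by
  cases d with
  | zero => exact j.elim0
  | succ n => exact div_int_zero h hh hc j

/-- Infinitesimal invariance of the Langevin-type dynamics with drift
`b = ((Σ+U)/2)∇ln p` (Σ symmetric PSD, U antisymmetric) and diffusion matrix Σ:
`∫ (Af) p dx = 0` for all smooth compactly supported `f`, where
`A f = b·∇f + (1/2) tr(Σ ∇²f)`. -/
theorem stmt_14 (d : ℕ)
    (p : (Fin d → ℝ) → ℝ) (hp_smooth : ContDiff ℝ 1 p) (hp_pos : ∀ x, 0 < p x)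
    (hp_int : Integrable p volume)
    (S U : Matrix (Fin d) (Fin d) ℝ)
    (hS_symm : S.IsSymm) (hS_psd : S.PosSemidef)
    (hU_anti : U.transpose = -U)
    (gradlogp : (Fin d → ℝ) → Fin d → ℝ)
    (hgradlogp : ∀ x i,
      gradlogp x i = fderiv ℝ (fun y => Real.log (p y)) x (Pi.single i 1))
    (hgrad_loc_int : ∀ i,
      LocallyIntegrable (fun x => gradlogp x i * p x) volume)
    (b : (Fin d → ℝ) → Fin d → ℝ)
    (hb : ∀ x i, b x i = (1 / 2) * ∑ j, (S i j + U i j) * gradlogp x j) :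
    ∀ f : (Fin d → ℝ) → ℝ, ContDiff ℝ (⊤ : ℕ∞) f → HasCompactSupport f →
      ∫ x, (∑ i, b x i * fderiv ℝ f x (Pi.single i 1)
          + (1 / 2) * ∑ i, ∑ j,
              S i j * fderiv ℝ (fun z => fderiv ℝ f z (Pi.single j 1)) x
                (Pi.single i 1)) * p x ∂volume = 0 := by
  intro f hf hcf
  set e : Fin d → (Fin d → ℝ) := fun i => Pi.single i 1 with he
  set df : Fin d → (Fin d → ℝ) → ℝ := fun i x => fderiv ℝ f x (e i) with hdf
  -- smoothness of first partials
  have hfd' : ContDiff ℝ (⊤ : ℕ∞) (fderiv ℝ f) := hf.fderiv_right (m := (⊤ : ℕ∞)) (by simp)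
  have hdf_cd : ∀ i, ContDiff ℝ (⊤ : ℕ∞) (df i) := fun i => hfd'.clm_apply contDiff_const
  have hdf_supp : ∀ i x, x ∉ tsupport f → df i x = 0 := by
    intro i x hx
    have hz : fderiv ℝ f x = 0 := by
      by_contra hne
      exact hx (support_fderiv_subset ℝ (Function.mem_support.2 hne))
    simp [hdf, hz]
  -- gradient of log
  have hp' : ∀ x j, gradlogp x j * p x = fderiv ℝ p x (e j) := by
    intro x j
    have hd : HasFDerivAt p (fderiv ℝ p x) x :=
      (hp_smooth.differentiable one_ne_zero x).hasFDerivAt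
    have hl := hd.log (ne_of_gt (hp_pos x))
    rw [hgradlogp, hl.fderiv]
    simp only [ContinuousLinearMap.smul_apply, smul_eq_mul]
    rw [inv_mul_eq_div, div_mul_eq_mul_div, mul_div_assoc,
      div_self (hp_pos x).ne', mul_one]
  -- symmetry of second derivative
  have hswap : ∀ (x : Fin d → ℝ) i i',
      fderiv ℝ (df i) x (e i') = fderiv ℝ (df i') x (e i) := by
    intro x i i'
    have hdiff : DifferentiableAt ℝ (fderiv ℝ f) x :=
      hfd'.differentiable (by simp) x
    have hA : ∀ v : Fin d → ℝ, fderiv ℝ (fun z => fderiv ℝ f z v) x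
        = (fderiv ℝ (fderiv ℝ f) x).flip v := by
      intro v
      have := fderiv_clm_apply (c := fderiv ℝ f) (u := fun _ => v) hdiff
        (differentiableAt_const v)
      simpa using this
    have hsymm : fderiv ℝ (fderiv ℝ f) x (e i') (e i)
        = fderiv ℝ (fderiv ℝ f) x (e i) (e i') := by
      have hs := (hf.contDiffAt (x := x)).isSymmSndFDerivAt (by rw [minSmoothness_of_isRCLikeNormedField]; exact WithTop.coe_le_coe.mpr le_top)
      exact hs (e i') (e i)
    calc fderiv ℝ (df i) x (e i') = fderiv ℝ (fderiv ℝ f) x (e i') (e i) := by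
          rw [hdf]; rw [hA (e i)]; rfl
      _ = fderiv ℝ (fderiv ℝ f) x (e i) (e i') := hsymm
      _ = fderiv ℝ (df i') x (e i) := by rw [hdf]; rw [hA (e i')]; rfl
  -- the coefficient matrix and auxiliary vector field
  set c : Fin d → Fin d → ℝ := fun i j => (1 / 2) * (S i j + U i j) with hc
  set g : Fin d → (Fin d → ℝ) → ℝ := fun j x => ∑ i, c i j * df i x with hg
  set V : Fin d → (Fin d → ℝ) → ℝ := fun j x => g j x * p x with hV
  have hg_cd : ∀ j, ContDiff ℝ (⊤ : ℕ∞) (g j) := fun j =>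
    ContDiff.sum fun i _ => contDiff_const.mul (hdf_cd i)
  have hV_cd : ∀ j, ContDiff ℝ 1 (V j) := fun j =>
    ((hg_cd j).of_le (by simp)).mul hp_smooth
  have hg0 : ∀ j x, x ∉ tsupport f → g j x = 0 := by
    intro j x hx
    exact Finset.sum_eq_zero fun i _ => by rw [hdf_supp i x hx, mul_zero]
  have hV_cs : ∀ j, HasCompactSupport (V j) :=
    fun j => HasCompactSupport.intro hcf fun x hx => by
      simp only [hV, hg0 j x hx, zero_mul]
  have hDV0 : ∀ j, ∫ x, fderiv ℝ (V j) x (e j) = 0 := fun j =>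
    div_int_zero' (V j) (hV_cd j) (hV_cs j) j
  -- pointwise formula for the divergence terms
  have hgd : ∀ j x, DifferentiableAt ℝ (g j) x := fun j x =>
    (hg_cd j).differentiable (by simp) x
  have hpd : ∀ x, DifferentiableAt ℝ p x := fun x =>
    hp_smooth.differentiable one_ne_zero x
  have hdfd : ∀ i x, DifferentiableAt ℝ (df i) x := fun i x =>
    (hdf_cd i).differentiable (by simp) x
  have hgj : ∀ j x (v : Fin d → ℝ), fderiv ℝ (g j) x v
      = ∑ i, c i j * fderiv ℝ (df i) x v := by
    intro j x v
    rw [hg]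
    rw [fderiv_fun_sum (fun i _ => ((hdfd i x).const_mul (c i j)))]
    rw [ContinuousLinearMap.sum_apply]
    refine Finset.sum_congr rfl fun i _ => ?_
    rw [fderiv_const_mul (hdfd i x)]
    simp
  have h1 : ∀ j x, fderiv ℝ (V j) x (e j)
      = (∑ i, c i j * df i x) * fderiv ℝ p x (e j)
        + p x * ∑ i, c i j * fderiv ℝ (df j) x (e i) := by
    intro j x
    rw [hV]
    rw [fderiv_fun_mul (hgd j x) (hpd x)]
    simp only [ContinuousLinearMap.add_apply, ContinuousLinearMap.smul_apply, smul_eq_mul]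
    rw [hgj j x (e j)]
    refine congrArg₂ HAdd.hAdd rfl ?_
    rw [Finset.mul_sum, Finset.mul_sum]
    refine Finset.sum_congr rfl fun i _ => ?_
    rw [hswap x i j]
  -- the main pointwise identity
  have main : ∀ x, (∑ i, b x i * fderiv ℝ f x (Pi.single i 1)
      + (1 / 2) * ∑ i, ∑ j,
          S i j * fderiv ℝ (fun z => fderiv ℝ f z (Pi.single j 1)) x
            (Pi.single i 1)) * p x = ∑ j, fderiv ℝ (V j) x (e j) := by
    intro x
    have hstmt : ∀ i j : Fin d,
        fderiv ℝ (fun z => fderiv ℝ f z (Pi.single j 1)) x (Pi.single i 1)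
          = fderiv ℝ (df j) x (e i) := fun i j => rfl
    have hsing : ∀ i : Fin d, fderiv ℝ f x (Pi.single i 1) = df i x := fun i => rfl
    simp only [hstmt, hsing, h1]
    -- antisymmetric part vanishes
    have hU' : ∀ i j, U j i = -U i j := by
      intro i j
      have := congrFun (congrFun hU_anti i) j
      simpa [Matrix.transpose_apply, Matrix.neg_apply] using this
    have hH : ∀ i j, fderiv ℝ (df j) x (e i) = fderiv ℝ (df i) x (e j) :=
      fun i j => hswap x j i
    have hU0 : (∑ i, ∑ j, U i j * fderiv ℝ (df j) x (e i)) = 0 := by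
      have hneg : (∑ i, ∑ j, U i j * fderiv ℝ (df j) x (e i))
          = -(∑ i, ∑ j, U i j * fderiv ℝ (df j) x (e i)) := by
        calc (∑ i, ∑ j, U i j * fderiv ℝ (df j) x (e i))
            = ∑ a, ∑ i, U i a * fderiv ℝ (df a) x (e i) := Finset.sum_comm
          _ = ∑ a, ∑ i, -(U a i * fderiv ℝ (df i) x (e a)) := by
              refine Finset.sum_congr rfl fun a _ => Finset.sum_congr rfl fun i _ => ?_
              rw [hU' a i, hH i a]
              ring
          _ = -(∑ a, ∑ i, U a i * fderiv ℝ (df i) x (e a)) := by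
              simp only [Finset.sum_neg_distrib]
      linarith
    have key2 : (∑ i, ∑ j, c i j * fderiv ℝ (df j) x (e i))
        = (1 / 2) * ∑ i, ∑ j, S i j * fderiv ℝ (df j) x (e i) := by
      calc (∑ i, ∑ j, c i j * fderiv ℝ (df j) x (e i))
          = ∑ i, ∑ j, ((1/2) * (S i j * fderiv ℝ (df j) x (e i))
              + (1/2) * (U i j * fderiv ℝ (df j) x (e i))) := by
            refine Finset.sum_congr rfl fun i _ => Finset.sum_congr rfl fun j _ => ?_
            rw [hc]; ring
        _ = (1/2) * (∑ i, ∑ j, S i j * fderiv ℝ (df j) x (e i))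
              + (1/2) * (∑ i, ∑ j, U i j * fderiv ℝ (df j) x (e i)) := by
            simp [Finset.sum_add_distrib, Finset.mul_sum]
        _ = (1 / 2) * ∑ i, ∑ j, S i j * fderiv ℝ (df j) x (e i) := by
            rw [hU0]; ring
    rw [Finset.sum_add_distrib, add_mul, Finset.sum_mul]
    congr 1
    · -- first-order terms
      calc ∑ i, b x i * df i x * p x
          = ∑ i, ∑ j, c i j * df i x * fderiv ℝ p x (e j) := by
            refine Finset.sum_congr rfl fun i _ => ?_
            rw [hb x i, Finset.mul_sum, Finset.sum_mul, Finset.sum_mul]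
            refine Finset.sum_congr rfl fun j _ => ?_
            rw [← hp' x j, hc]
            ring
        _ = ∑ j, ∑ i, c i j * df i x * fderiv ℝ p x (e j) := Finset.sum_comm
        _ = ∑ j, (∑ i, c i j * df i x) * fderiv ℝ p x (e j) := by
            refine Finset.sum_congr rfl fun j _ => ?_
            rw [Finset.sum_mul]
    · -- second-order terms
      calc (1 / 2) * (∑ i, ∑ j, S i j * fderiv ℝ (df j) x (e i)) * p x
          = (∑ i, ∑ j, c i j * fderiv ℝ (df j) x (e i)) * p x := by rw [key2]
        _ = ∑ j, ∑ i, c i j * fderiv ℝ (df j) x (e i) * p x := by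
            rw [Finset.sum_mul, Finset.sum_comm]
            exact Finset.sum_congr rfl fun j _ => by rw [Finset.sum_mul]
        _ = ∑ j, p x * ∑ i, c i j * fderiv ℝ (df j) x (e i) := by
            refine Finset.sum_congr rfl fun j _ => ?_
            rw [Finset.mul_sum]
            exact Finset.sum_congr rfl fun i _ => by ring
  -- integrability of each divergence term
  have hint : ∀ j, Integrable (fun x => fderiv ℝ (V j) x (e j)) volume := by
    intro j
    apply Continuous.integrable_of_hasCompactSupport
    · exact ((hV_cd j).continuous_fderiv one_ne_zero).clm_apply continuous_const
    · apply HasCompactSupport.intro (hV_cs j)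
      intro x hx
      have hz : fderiv ℝ (V j) x = 0 := by
        by_contra hne
        exact hx (support_fderiv_subset ℝ (Function.mem_support.2 hne))
      simp [hz]
  calc ∫ x, (∑ i, b x i * fderiv ℝ f x (Pi.single i 1)
          + (1 / 2) * ∑ i, ∑ j,
              S i j * fderiv ℝ (fun z => fderiv ℝ f z (Pi.single j 1)) x
                (Pi.single i 1)) * p x ∂volume
      = ∫ x, ∑ j, fderiv ℝ (V j) x (e j) ∂volume := by
        exact integral_congr_ae (Filter.Eventually.of_forall main)
    _ = ∑ j, ∫ x, fderiv ℝ (V j) x (e j) ∂volume :=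
        integral_finset_sum _ fun j _ => hint j
    _ = 0 := by simp [hDV0]
end

section
/- Consider the jump process generator A f(x) = (ζf)(x) − f(x) + κ(x)(μf − f(x)) on {p > 0}, where ζ is a π-invariant Markov kernel, μ is a probability measure with density m/m_λ w.r.t. λ, and κ(x) = κ₀(p_λ/m_λ)m(x)/p(x). Then ∫ Af dπ = 0 for all bounded measurable f supported in {p > 0}; i.e., π is infinitesimally invariant for the jump Restore process. -/
open MeasureTheory
open scoped NNReal ENNReal

lemma aux_inv_nonneg {E : Type*} [MeasurableSpace E]
    (π : Measure E) [IsProbabilityMeasure π]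
    (ζ : E → Measure E) (hζm : Measurable ζ) (hζp : ∀ x, IsProbabilityMeasure (ζ x))
    (hbind : π.bind ζ = π) (g : E → ℝ) (hg : Measurable g) (hg0 : ∀ x, 0 ≤ g x)
    (C : ℝ) (hgC : ∀ x, g x ≤ C) :
    ∫ x, ∫ y, g y ∂(ζ x) ∂π = ∫ x, g x ∂π := by
  have hG : Measurable fun y => ENNReal.ofReal (g y) := hg.ennreal_ofReal
  have hfin : ∀ (ν : Measure E), IsProbabilityMeasure ν →
      ∫⁻ y, ENNReal.ofReal (g y) ∂ν ≤ ENNReal.ofReal C := by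
    intro ν hν
    calc ∫⁻ y, ENNReal.ofReal (g y) ∂ν ≤ ∫⁻ _, ENNReal.ofReal C ∂ν :=
          lintegral_mono fun y => ENNReal.ofReal_le_ofReal (hgC y)
      _ = ENNReal.ofReal C := by simp [hν.measure_univ]
  have h1 : ∀ (ν : Measure E), ∫ y, g y ∂ν = (∫⁻ y, ENNReal.ofReal (g y) ∂ν).toReal :=
    fun ν => integral_eq_lintegral_of_nonneg_ae (Filter.Eventually.of_forall hg0)
      hg.aestronglyMeasurable
  rw [h1 π]
  have h2 : ∫ x, ∫ y, g y ∂(ζ x) ∂π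
      = ∫ x, (∫⁻ y, ENNReal.ofReal (g y) ∂(ζ x)).toReal ∂π :=
    integral_congr_ae (Filter.Eventually.of_forall fun x => h1 (ζ x))
  rw [h2]
  have hmeas : Measurable fun x => ∫⁻ y, ENNReal.ofReal (g y) ∂(ζ x) :=
    (Measure.measurable_lintegral hG).comp hζm
  rw [integral_toReal hmeas.aemeasurable
    (Filter.Eventually.of_forall fun x =>
      lt_of_le_of_lt (hfin (ζ x) (hζp x)) ENNReal.ofReal_lt_top)]
  rw [← Measure.lintegral_bind hζm.aemeasurable hG.aemeasurable, hbind]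

lemma aux_inv {E : Type*} [MeasurableSpace E]
    (π : Measure E) [IsProbabilityMeasure π]
    (ζ : E → Measure E) (hζm : Measurable ζ) (hζp : ∀ x, IsProbabilityMeasure (ζ x))
    (hbind : π.bind ζ = π) (f : E → ℝ) (hf : Measurable f)
    (C : ℝ) (hfC : ∀ x, |f x| ≤ C) :
    ∫ x, ∫ y, f y ∂(ζ x) ∂π = ∫ x, f x ∂π := by
  rcases isEmpty_or_nonempty E with h | h
  · exact absurd (measure_univ (μ := π)) (by simp [Set.univ_eq_empty_iff.2 h])
  have hC0 : 0 ≤ C := (abs_nonneg _).trans (hfC (Classical.arbitrary E))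
  have hG : Measurable fun y => ENNReal.ofReal (f y + C) := (hf.add_const C).ennreal_ofReal
  have hnn : ∀ x, 0 ≤ f x + C := fun x => by have := (abs_le.1 (hfC x)).1; linarith
  have hintf : ∀ (ν : Measure E), IsProbabilityMeasure ν → Integrable f ν := fun ν hν =>
    (integrable_const C).mono' hf.aestronglyMeasurable
      (Filter.Eventually.of_forall fun x => by simpa [Real.norm_eq_abs] using hfC x)
  have hplus : ∀ (ν : Measure E), IsProbabilityMeasure ν →
      ∫ y, (f y + C) ∂ν = (∫ y, f y ∂ν) + C := by
    intro ν hν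
    rw [integral_add (hintf ν hν) (integrable_const C), integral_const, probReal_univ]
    simp
  have hmeasp : Measurable fun x => ∫ y, (f y + C) ∂(ζ x) := by
    have he : (fun x => ∫ y, (f y + C) ∂(ζ x))
        = fun x => (∫⁻ y, ENNReal.ofReal (f y + C) ∂(ζ x)).toReal :=
      funext fun x => integral_eq_lintegral_of_nonneg_ae (Filter.Eventually.of_forall hnn)
        (hf.add_const C).aestronglyMeasurable
    rw [he]
    exact ((Measure.measurable_lintegral hG).comp hζm).ennreal_toReal
  have hbd : ∀ y, ‖f y + C‖ ≤ C + C := fun y => by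
    rw [Real.norm_eq_abs]
    calc |f y + C| ≤ |f y| + |C| := abs_add_le _ _
      _ ≤ C + C := by have := hfC y; rw [abs_of_nonneg hC0]; linarith
  have hintp : Integrable (fun x => ∫ y, (f y + C) ∂(ζ x)) π :=
    (integrable_const (C + C)).mono' hmeasp.aestronglyMeasurable
      (Filter.Eventually.of_forall fun x => by
        haveI := hζp x
        calc ‖∫ y, (f y + C) ∂(ζ x)‖
            ≤ (C + C) * ((ζ x) Set.univ).toReal :=
              norm_integral_le_of_norm_le_const (Filter.Eventually.of_forall hbd)
          _ ≤ C + C := by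
              rw [(hζp x).measure_univ]
              simp)
  have key := aux_inv_nonneg π ζ hζm hζp hbind (fun y => f y + C) (hf.add_const C) hnn
    (C + C) (fun x => by have := (abs_le.1 (hfC x)).2; show f x + C ≤ C + C; linarith)
  calc ∫ x, ∫ y, f y ∂(ζ x) ∂π
      = ∫ x, ((∫ y, (f y + C) ∂(ζ x)) - C) ∂π := by
        refine integral_congr_ae (Filter.Eventually.of_forall fun x => ?_)
        show ∫ y, f y ∂(ζ x) = (∫ y, (f y + C) ∂(ζ x)) - C
        rw [hplus (ζ x) (hζp x)]; ring
    _ = (∫ x, ∫ y, (f y + C) ∂(ζ x) ∂π) - ∫ _x, (C : ℝ) ∂π :=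
        integral_sub hintp (integrable_const C)
    _ = (∫ x, (f x + C) ∂π) - C := by
        rw [key, integral_const, probReal_univ]; simp
    _ = ∫ x, f x ∂π := by rw [hplus π ‹_›]; ring

lemma aux_meas_int {E : Type*} [MeasurableSpace E]
    (ζ : E → Measure E) (hζm : Measurable ζ) (hζp : ∀ x, IsProbabilityMeasure (ζ x))
    (f : E → ℝ) (hf : Measurable f) (C : ℝ) (hfC : ∀ x, |f x| ≤ C) :
    Measurable fun x => ∫ y, f y ∂(ζ x) := by
  set C' := |C| with hC'
  have hfC' : ∀ x, |f x| ≤ C' := fun x => (hfC x).trans (le_abs_self C)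
  have hnn : ∀ x, 0 ≤ f x + C' := fun x => by have := (abs_le.1 (hfC' x)).1; linarith
  have hG : Measurable fun y => ENNReal.ofReal (f y + C') := (hf.add_const C').ennreal_ofReal
  have hintf : ∀ (ν : Measure E), IsProbabilityMeasure ν → Integrable f ν := fun ν hν =>
    (integrable_const C').mono' hf.aestronglyMeasurable
      (Filter.Eventually.of_forall fun x => by simpa [Real.norm_eq_abs] using hfC' x)
  have he : (fun x => ∫ y, f y ∂(ζ x))
      = fun x => (∫⁻ y, ENNReal.ofReal (f y + C') ∂(ζ x)).toReal - C' := by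
    funext x
    haveI := hζp x
    rw [← integral_eq_lintegral_of_nonneg_ae (Filter.Eventually.of_forall hnn)
      (hf.add_const C').aestronglyMeasurable,
      integral_add (hintf (ζ x) (hζp x)) (integrable_const C'), integral_const,
      probReal_univ]
    simp
  rw [he]
  exact ((Measure.measurable_lintegral hG).comp hζm).ennreal_toReal.sub measurable_const

/-- Infinitesimal invariance of the jump Restore process: with π-invariant local
dynamics `ζ`, regeneration measure `μ` with density `m/m_λ`, and killing rate
`κ = κ₀ (p_λ/m_λ) m/p`, one has `∫ Af dπ = 0` for all bounded measurable `f`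
supported in `{p > 0}`, where `A f = ζf - f + κ(μf - f)`. -/
theorem stmt_18 {E : Type*} [MeasurableSpace E]
    (lam : Measure E) [SigmaFinite lam]
    (p m : E → ℝ) (hp_meas : Measurable p) (hm_meas : Measurable m)
    (hp_nonneg : ∀ x, 0 ≤ p x) (hm_nonneg : ∀ x, 0 ≤ m x)
    (hp_pos : ∀ᵐ x ∂lam, 0 < p x)
    (plam mlam : ℝ)
    (hplam : plam = ∫ x, p x ∂lam) (hmlam : mlam = ∫ x, m x ∂lam)
    (hplam_pos : 0 < plam) (hmlam_pos : 0 < mlam)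
    (π μ : Measure E)
    (hπ : π = lam.withDensity fun x => ENNReal.ofReal (p x / plam))
    (hμ : μ = lam.withDensity fun x => ENNReal.ofReal (m x / mlam))
    [IsProbabilityMeasure π] [IsProbabilityMeasure μ]
    (ζ : E → Measure E) (hζ_markov : ∀ x, IsProbabilityMeasure (ζ x))
    (hζ_meas : ∀ A : Set E, MeasurableSet A → Measurable fun x => ζ x A)
    -- π-invariance of the local dynamics:
    (hζ_inv : ∀ A : Set E, MeasurableSet A → ∫⁻ x, ζ x A ∂π = π A)
    (κ₀ : ℝ) (hκ₀ : 0 < κ₀)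
    (κ : E → ℝ) (hκ : ∀ x, κ x = κ₀ * (plam / mlam) * (m x / p x)) :
    ∀ f : E → ℝ, Measurable f → (∃ C, ∀ x, |f x| ≤ C) →
      (∀ x, p x = 0 → f x = 0) →
      ∫ x, ((∫ y, f y ∂(ζ x)) - f x + κ x * ((∫ y, f y ∂μ) - f x)) ∂π = 0 := by
  intro f hf hbdd hsupp
  obtain ⟨C, hC⟩ := hbdd
  -- basic facts
  have hζm : Measurable ζ := Measure.measurable_of_measurable_coe ζ hζ_meas
  have hbind : π.bind ζ = π := Measure.ext fun s hs => by
    rw [Measure.bind_apply hs hζm.aemeasurable]; exact hζ_inv s hs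
  have hintf : ∀ (ν : Measure E), IsProbabilityMeasure ν → Integrable f ν := fun ν hν =>
    (integrable_const C).mono' hf.aestronglyMeasurable
      (Filter.Eventually.of_forall fun x => by simpa [Real.norm_eq_abs] using hC x)
  have hκ_meas : Measurable κ := by
    have : κ = fun x => κ₀ * (plam / mlam) * (m x / p x) := funext hκ
    rw [this]
    exact (measurable_const.mul (hm_meas.div hp_meas))
  set μf : ℝ := ∫ y, f y ∂μ with hμf
  set A : E → ℝ := fun x => (∫ y, f y ∂(ζ x)) - f x with hA
  set B : E → ℝ := fun x => κ x * (μf - f x) with hB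
  -- measurability / integrability of A
  have hmA : Measurable fun x => ∫ y, f y ∂(ζ x) :=
    aux_meas_int ζ hζm hζ_markov f hf C hC
  have hbdζ : ∀ x, |∫ y, f y ∂(ζ x)| ≤ C := fun x => by
    haveI := hζ_markov x
    calc |∫ y, f y ∂(ζ x)| ≤ C * ((ζ x) Set.univ).toReal := by
          rw [← Real.norm_eq_abs]
          exact norm_integral_le_of_norm_le_const
            (Filter.Eventually.of_forall fun y => by simpa [Real.norm_eq_abs] using hC y)
      _ = C := by rw [(hζ_markov x).measure_univ]; simp
  have hintζ : Integrable (fun x => ∫ y, f y ∂(ζ x)) π :=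
    (integrable_const C).mono' hmA.aestronglyMeasurable
      (Filter.Eventually.of_forall fun x => by simpa [Real.norm_eq_abs] using hbdζ x)
  have hA_int : Integrable A π := hintζ.sub (hintf π ‹_›)
  -- integrability of m / mlam wrt lam
  have hμuniv : ∫⁻ x, ENNReal.ofReal (m x / mlam) ∂lam = 1 := by
    have h1 : μ Set.univ = 1 := measure_univ
    rw [hμ, withDensity_apply _ MeasurableSet.univ] at h1
    simpa using h1
  have hm_int : Integrable (fun x => m x / mlam) lam := by
    refine ⟨(hm_meas.div_const mlam).aestronglyMeasurable, ?_⟩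
    rw [hasFiniteIntegral_iff_ofReal
      (Filter.Eventually.of_forall fun x => div_nonneg (hm_nonneg x) hmlam_pos.le)]
    rw [hμuniv]; exact ENNReal.one_lt_top
  -- the key pointwise identity on {p > 0}
  have hkey : ∀ x, 0 < p x → B x * (p x / plam) = κ₀ * ((μf - f x) * (m x / mlam)) := by
    intro x hx
    have hBx : B x = κ x * (μf - f x) := rfl
    rw [hBx, hκ x]
    field_simp
  -- integrability of B wrt π
  have hBmeas : Measurable B := hκ_meas.mul (measurable_const.sub hf)
  have hdπ_meas : Measurable fun x => ENNReal.ofReal (p x / plam) :=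
    (hp_meas.div_const plam).ennreal_ofReal
  have hbase_int : Integrable (fun x => κ₀ * ((μf - f x) * (m x / mlam))) lam := by
    refine Integrable.const_mul ?_ κ₀
    exact hm_int.bdd_mul (measurable_const.sub hf).aestronglyMeasurable
      (c := abs μf + C) (Filter.Eventually.of_forall fun x => by
        rw [Real.norm_eq_abs]
        calc abs (μf - f x) ≤ abs μf + abs (f x) := abs_sub _ _
          _ ≤ abs μf + C := by have := hC x; linarith)
  have hB_int : Integrable B π := by
    rw [hπ, integrable_withDensity_iff hdπ_meas
      (Filter.Eventually.of_forall fun x => ENNReal.ofReal_lt_top)]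
    refine hbase_int.congr ?_
    filter_upwards [hp_pos] with x hx
    rw [ENNReal.toReal_ofReal (div_nonneg (hp_nonneg x) hplam_pos.le)]
    exact (hkey x hx).symm
  -- split the integral
  have hsplit : ∫ x, ((∫ y, f y ∂(ζ x)) - f x + κ x * (μf - f x)) ∂π
      = (∫ x, A x ∂π) + ∫ x, B x ∂π := integral_add hA_int hB_int
  rw [hsplit]
  -- ∫ A dπ = 0
  have hAzero : ∫ x, A x ∂π = 0 := by
    rw [hA]
    rw [integral_sub hintζ (hintf π ‹_›)]
    rw [aux_inv π ζ hζm hζ_markov hbind f hf C hC]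
    ring
  -- ∫ B dπ = 0
  have hBzero : ∫ x, B x ∂π = 0 := by
    have hd : Measurable fun x => (p x / plam).toNNReal :=
      (hp_meas.div_const plam).real_toNNReal
    have hdm : Measurable fun x => (m x / mlam).toNNReal :=
      (hm_meas.div_const mlam).real_toNNReal
    have hπ' : π = lam.withDensity fun x => (((Real.toNNReal (p x / plam) : ℝ≥0) : ℝ≥0∞)) := hπ
    have hμ' : μ = lam.withDensity fun x => (((Real.toNNReal (m x / mlam) : ℝ≥0) : ℝ≥0∞)) := hμ
    rw [hπ', integral_withDensity_eq_integral_smul hd]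
    have step1 : ∫ x, (p x / plam).toNNReal • B x ∂lam
        = ∫ x, κ₀ * ((μf - f x) * (m x / mlam)) ∂lam := by
      refine integral_congr_ae ?_
      filter_upwards [hp_pos] with x hx
      rw [NNReal.smul_def, smul_eq_mul,
        Real.coe_toNNReal _ (div_nonneg (hp_nonneg x) hplam_pos.le), mul_comm]
      exact hkey x hx
    rw [step1, integral_const_mul]
    have step2 : ∫ x, (μf - f x) * (m x / mlam) ∂lam = ∫ y, (μf - f y) ∂μ := by
      rw [hμ', integral_withDensity_eq_integral_smul hdm]
      refine integral_congr_ae (Filter.Eventually.of_forall fun x => ?_)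
      show (μf - f x) * (m x / mlam) = (m x / mlam).toNNReal • (μf - f x)
      rw [NNReal.smul_def, smul_eq_mul,
        Real.coe_toNNReal _ (div_nonneg (hm_nonneg x) hmlam_pos.le), mul_comm]
    rw [step2, integral_sub (integrable_const μf) (hintf μ ‹_›), integral_const,
      probReal_univ]
    simp [hμf]
  rw [hAzero, hBzero, add_zero]
end
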